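/- Let n ≥ 1, let A be an invertible n×n real matrix, let γ ∈ ℝ, let S ⊆ ℝ^n be measurable, and let g : ℝ^n → [0,∞] be measurable. Then ∫_{S} g(Ax)·|x|^{γ} dx ≤ |det(A^{-1})|·max{‖A^{-1}‖^{γ}, ‖A‖^{-γ}}·∫_{A(S)} g(z)·|z|^{γ} dz, where A(S) denotes the image of S under A and the integrals are Lebesgue integrals valued in [0,∞]. -/
import Mathlib


open MeasureTheory ENNReal Real BigOperators Finset Matrix

noncomputable section

/-- Euclidean norm on `Fin n → ℝ`. -/
def eNorm {n : ℕ} (x : Fin n → ℝ) : ℝ := Real.sqrt (∑ i, x i ^ 2)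

/-- Frobenius norm of an `n × n` real matrix. -/
def frob {n : ℕ} (A : Matrix (Fin n) (Fin n) ℝ) : ℝ := Real.sqrt (∑ i, ∑ j, A i j ^ 2)

lemma eNorm_nonneg {n : ℕ} (x : Fin n → ℝ) : 0 ≤ eNorm x := Real.sqrt_nonneg _

lemma frob_nonneg {n : ℕ} (A : Matrix (Fin n) (Fin n) ℝ) : 0 ≤ frob A := Real.sqrt_nonneg _

lemma eNorm_zero {n : ℕ} : eNorm (0 : Fin n → ℝ) = 0 := by simp [eNorm]

lemma eNorm_pos {n : ℕ} {x : Fin n → ℝ} (hx : x ≠ 0) : 0 < eNorm x := by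
  apply Real.sqrt_pos.2
  have : ∃ i, x i ≠ 0 := by
    by_contra h; push_neg at h; exact hx (funext h)
  obtain ⟨i, hi⟩ := this
  exact Finset.sum_pos' (fun j _ => sq_nonneg _) ⟨i, Finset.mem_univ i, by positivity⟩

lemma eNorm_mulVec_le {n : ℕ} (A : Matrix (Fin n) (Fin n) ℝ) (x : Fin n → ℝ) :
    eNorm (A.mulVec x) ≤ frob A * eNorm x := by
  have h : ∑ i, (A.mulVec x i) ^ 2 ≤ (∑ i, ∑ j, A i j ^ 2) * ∑ j, x j ^ 2 := by
    rw [Finset.sum_mul]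
    apply Finset.sum_le_sum
    intro i _
    simpa [Matrix.mulVec, dotProduct] using
      Finset.sum_mul_sq_le_sq_mul_sq Finset.univ (fun j => A i j) x
  have h2 := Real.sqrt_le_sqrt h
  rw [Real.sqrt_mul (by positivity)] at h2
  exact h2

lemma key_pointwise {n : ℕ} (A : Matrix (Fin n) (Fin n) ℝ) (hA : IsUnit A.det) (γ : ℝ)
    (x : Fin n → ℝ) :
    eNorm x ^ γ ≤ max (frob A⁻¹ ^ γ) (frob A ^ (-γ)) * eNorm (A.mulVec x) ^ γ := by
  have hinvA : A⁻¹.mulVec (A.mulVec x) = x := by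
    rw [Matrix.mulVec_mulVec, Matrix.nonsing_inv_mul A hA, Matrix.one_mulVec]
  by_cases hx : x = 0
  · subst hx
    rw [Matrix.mulVec_zero, eNorm_zero]
    rcases eq_or_ne γ 0 with h | h
    · subst h
      simp [Real.rpow_zero]
    · rw [Real.zero_rpow h, mul_zero]
  · have hAx : A.mulVec x ≠ 0 := by
      intro h
      apply hx
      rw [← hinvA, h, Matrix.mulVec_zero]
    have hxp : 0 < eNorm x := eNorm_pos hx
    have hAxp : 0 < eNorm (A.mulVec x) := eNorm_pos hAx
    rcases le_or_gt 0 γ with hγ | hγ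
    · have h1 : eNorm x ≤ frob A⁻¹ * eNorm (A.mulVec x) := by
        have := eNorm_mulVec_le A⁻¹ (A.mulVec x)
        rwa [hinvA] at this
      have h2 : eNorm x ^ γ ≤ (frob A⁻¹ * eNorm (A.mulVec x)) ^ γ :=
        Real.rpow_le_rpow (eNorm_nonneg x) h1 hγ
      rw [Real.mul_rpow (frob_nonneg _) (eNorm_nonneg _)] at h2
      exact h2.trans (mul_le_mul_of_nonneg_right (le_max_left _ _)
        (Real.rpow_nonneg (eNorm_nonneg _) _))
    · have hle := eNorm_mulVec_le A x
      have hfA : 0 < frob A := by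
        rcases (frob_nonneg A).lt_or_eq with h | h
        · exact h
        · exfalso; rw [← h, zero_mul] at hle; linarith
      have h2 : eNorm (A.mulVec x) / frob A ≤ eNorm x := by
        rw [div_le_iff₀ hfA]
        linarith [hle, mul_comm (frob A) (eNorm x)]
      have h3 : eNorm x ^ γ ≤ (eNorm (A.mulVec x) / frob A) ^ γ :=
        Real.rpow_le_rpow_of_nonpos (div_pos hAxp hfA) h2 hγ.le
      rw [Real.div_rpow (eNorm_nonneg _) hfA.le, div_eq_mul_inv,
        ← Real.rpow_neg hfA.le] at h3
      calc eNorm x ^ γ ≤ eNorm (A.mulVec x) ^ γ * frob A ^ (-γ) := h3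
        _ = frob A ^ (-γ) * eNorm (A.mulVec x) ^ γ := mul_comm _ _
        _ ≤ max (frob A⁻¹ ^ γ) (frob A ^ (-γ)) * eNorm (A.mulVec x) ^ γ :=
            mul_le_mul_of_nonneg_right (le_max_right _ _)
              (Real.rpow_nonneg (eNorm_nonneg _) _)

/-- Change of variables estimate:
`∫_S g(Ax)|x|^γ dx ≤ |det A⁻¹| · max {‖A⁻¹‖^γ, ‖A‖^(-γ)} · ∫_{A(S)} g(z)|z|^γ dz`. -/
theorem hausdorff_stmt8 (n : ℕ) (hn : 1 ≤ n) (A : Matrix (Fin n) (Fin n) ℝ)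
    (hA : IsUnit A.det) (γ : ℝ) (S : Set (Fin n → ℝ)) (hS : MeasurableSet S)
    (g : (Fin n → ℝ) → ℝ≥0∞) (hg : Measurable g) :
    (∫⁻ x in S, g (A.mulVec x) * ENNReal.ofReal (eNorm x ^ γ)) ≤
      ENNReal.ofReal (|(A⁻¹).det| * max (frob A⁻¹ ^ γ) (frob A ^ (-γ))) *
        ∫⁻ z in A.mulVec '' S, g z * ENNReal.ofReal (eNorm z ^ γ) := by
  set C := max (frob A⁻¹ ^ γ) (frob A ^ (-γ)) with hCdef
  have hC0 : 0 ≤ C :=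
    le_trans (Real.rpow_nonneg (frob_nonneg _) _) (le_max_left _ _)
  have hdetA : A.det ≠ 0 := hA.ne_zero
  have hinj : Function.Injective A.mulVec := by
    intro x y h
    have : A⁻¹.mulVec (A.mulVec x) = A⁻¹.mulVec (A.mulVec y) := by rw [h]
    simpa [Matrix.mulVec_mulVec, Matrix.nonsing_inv_mul A hA, Matrix.one_mulVec] using this
  have hder : ∀ x ∈ S, HasFDerivWithinAt A.mulVec
      (LinearMap.toContinuousLinearMap A.mulVecLin) S x := fun x _ =>
    (LinearMap.toContinuousLinearMap A.mulVecLin).hasFDerivAt.hasFDerivWithinAt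
  have hdet : (LinearMap.toContinuousLinearMap A.mulVecLin).det = A.det := by
    rw [ContinuousLinearMap.det, LinearMap.coe_toContinuousLinearMap]
    exact LinearMap.det_toLin' A
  have hcov := lintegral_image_eq_lintegral_abs_det_fderiv_mul volume hS hder (hinj.injOn)
    (fun z => g z * ENNReal.ofReal (eNorm z ^ γ))
  have hcov' : (∫⁻ z in A.mulVec '' S, g z * ENNReal.ofReal (eNorm z ^ γ))
      = ENNReal.ofReal |A.det| *
        ∫⁻ x in S, g (A.mulVec x) * ENNReal.ofReal (eNorm (A.mulVec x) ^ γ) := by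
    rw [hcov]
    simp only [hdet]
    exact lintegral_const_mul' _ _ ENNReal.ofReal_ne_top
  have hdet1 : |(A⁻¹).det| * |A.det| = 1 := by
    rw [Matrix.det_nonsing_inv, Ring.inverse_eq_inv', ← abs_mul, inv_mul_cancel₀ hdetA, abs_one]
  calc (∫⁻ x in S, g (A.mulVec x) * ENNReal.ofReal (eNorm x ^ γ))
      ≤ ∫⁻ x in S, ENNReal.ofReal C *
          (g (A.mulVec x) * ENNReal.ofReal (eNorm (A.mulVec x) ^ γ)) := by
        apply lintegral_mono
        intro x
        dsimp only
        rw [← mul_assoc, mul_comm (ENNReal.ofReal C), mul_assoc]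
        refine mul_le_mul_right ?_ _
        rw [← ENNReal.ofReal_mul hC0]
        exact ENNReal.ofReal_le_ofReal (key_pointwise A hA γ x)
    _ = ENNReal.ofReal C *
          ∫⁻ x in S, g (A.mulVec x) * ENNReal.ofReal (eNorm (A.mulVec x) ^ γ) :=
        lintegral_const_mul' _ _ ENNReal.ofReal_ne_top
    _ = ENNReal.ofReal (|(A⁻¹).det| * C) *
          ∫⁻ z in A.mulVec '' S, g z * ENNReal.ofReal (eNorm z ^ γ) := by
        rw [hcov', ← mul_assoc, ← ENNReal.ofReal_mul (by positivity)]
        congr 2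
        rw [mul_right_comm, hdet1, one_mul]
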